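/- arXiv:2009.08733 — 3 statements merged into one kernel-verified Lean document; each statement's English description precedes it below -/
import Mathlib

section
/- Let (M,g) be a Riemannian manifold and ∇, ∇* affine connections on M that are dual with respect to g, and let p ∈ M. Then the holonomy groups Hol_p^∇ and Hol_p^{∇*} (subgroups of GL(T_pM)) are isomorphic, an isomorphism ψ : Hol_p^∇ → Hol_p^{∇*} being given by ψ(A) = (A*)^{−1}, where A* denotes the adjoint of A with respect to the inner product g_p on T_pM; concretely, if A is the ∇-parallel translation around a piecewise C¹ loop σ based at p, then (A*)^{−1} is the ∇*-parallel translation around σ. -/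
/-!
An (idealized) model of a smooth `n`-dimensional Riemannian manifold `M` together with a
trivialization `Fin n → ℝ` of its tangent bundle along curves:  `g x` is the Riemannian
metric at the point `x`; curves in `M` and vector fields along curves are modelled as
bare functions, and the predicates `Adm` / `AdmF` single out the admissible (piecewise
`C¹`) curves, respectively the admissible fields along an admissible curve.
-/
structure RiemannModel (n : ℕ) (M : Type*) where
  /-- admissible (piecewise `C¹`) curves in `M` -/
  Adm : (ℝ → M) → Prop
  /-- admissible vector fields along an admissible curve -/
  AdmF : (ℝ → M) → (ℝ → (Fin n → ℝ)) → Prop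
  /-- the Riemannian metric -/
  g : M → (Fin n → ℝ) → (Fin n → ℝ) → ℝ
  g_symm : ∀ x v w, g x v w = g x w v
  g_add_left : ∀ x u v w, g x (u + v) w = g x u w + g x v w
  g_smul_left : ∀ x (c : ℝ) v w, g x (c • v) w = c * g x v w
  g_posdef : ∀ x v, v ≠ 0 → 0 < g x v v
  admF_const : ∀ σ v, Adm σ → AdmF σ fun _ => v
  admF_add : ∀ σ X Y, AdmF σ X → AdmF σ Y → AdmF σ fun s => X s + Y s
  admF_smul : ∀ σ (f : ℝ → ℝ) X, Differentiable ℝ f → AdmF σ X → AdmF σ fun s => f s • X s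

/-- An affine connection on `M`, recorded through the covariant derivative
`covD σ X : ℝ → (Fin n → ℝ)` of a vector field `X` along a curve `σ`. -/
structure IsConnection {n : ℕ} {M : Type*} (G : RiemannModel n M)
    (covD : (ℝ → M) → (ℝ → (Fin n → ℝ)) → ℝ → (Fin n → ℝ)) : Prop where
  covD_add : ∀ σ X Y, G.Adm σ → G.AdmF σ X → G.AdmF σ Y →
    ∀ t, covD σ (fun s => X s + Y s) t = covD σ X t + covD σ Y t
  covD_smul : ∀ σ (c : ℝ) X, G.Adm σ → G.AdmF σ X →
    ∀ t, covD σ (fun s => c • X s) t = c • covD σ X t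
  /-- parallel vector fields along admissible curves exist with any initial value -/
  par_exists : ∀ σ, G.Adm σ → ∀ (t₀ : ℝ) (v : Fin n → ℝ),
    ∃ X, G.AdmF σ X ∧ X t₀ = v ∧ ∀ t, covD σ X t = 0
  /-- parallel vector fields along admissible curves are determined by one value -/
  par_unique : ∀ σ X Y, G.Adm σ → G.AdmF σ X → G.AdmF σ Y →
    (∀ t, covD σ X t = 0) → (∀ t, covD σ Y t = 0) → X 0 = Y 0 → X = Y

/-- The connections `D`, `D'` are dual with respect to the metric of `G`:
`d/dt g(X,Y) = g(∇_{γ'} X, Y) + g(X, ∇*_{γ'} Y)` along every admissible curve. -/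
def AreDual {n : ℕ} {M : Type*} (G : RiemannModel n M)
    (D D' : (ℝ → M) → (ℝ → (Fin n → ℝ)) → ℝ → (Fin n → ℝ)) : Prop :=
  ∀ σ X Y, G.Adm σ → G.AdmF σ X → G.AdmF σ Y → ∀ t,
    HasDerivAt (fun s => G.g (σ s) (X s) (Y s))
      (G.g (σ t) (D σ X t) (Y t) + G.g (σ t) (X t) (D' σ Y t)) t

/-- `A` realizes the `D`-parallel translation along `σ` from time `0` to time `T`:
every vector `v` is carried to `A v` by a `D`-parallel field along `σ`. -/
def IsTransportAlong {n : ℕ} {M : Type*} (G : RiemannModel n M)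
    (D : (ℝ → M) → (ℝ → (Fin n → ℝ)) → ℝ → (Fin n → ℝ))
    (σ : ℝ → M) (T : ℝ) (A : Matrix.GeneralLinearGroup (Fin n) ℝ) : Prop :=
  ∀ v : Fin n → ℝ, ∃ X : ℝ → (Fin n → ℝ), G.AdmF σ X ∧ X 0 = v ∧
    (∀ t, D σ X t = 0) ∧ X T = (A : Matrix (Fin n) (Fin n) ℝ).mulVec v

/-- The set of parallel translations around piecewise `C¹` loops based at `p`. -/
def loopTransports {n : ℕ} {M : Type*} (G : RiemannModel n M)
    (D : (ℝ → M) → (ℝ → (Fin n → ℝ)) → ℝ → (Fin n → ℝ)) (p : M) :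
    Set (Matrix.GeneralLinearGroup (Fin n) ℝ) :=
  {A | ∃ (σ : ℝ → M) (T : ℝ), 0 < T ∧ G.Adm σ ∧ σ 0 = p ∧ σ T = p ∧
    IsTransportAlong G D σ T A}

/-- The holonomy group of the connection `D` at `p`. -/
noncomputable def holonomyGroup {n : ℕ} {M : Type*} (G : RiemannModel n M)
    (D : (ℝ → M) → (ℝ → (Fin n → ℝ)) → ℝ → (Fin n → ℝ)) (p : M) :
    Subgroup (Matrix.GeneralLinearGroup (Fin n) ℝ) :=
  Subgroup.closure (loopTransports G D p)

/-!
Duality makes `g(X, Y)` constant along `σ` whenever `X` is `∇`-parallel and `Y` is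
`∇*`-parallel. If `A` is the `∇`-transport around `σ` and `Y` is `∇*`-parallel, this gives
`g_p(A x, Y(T)) = g_p(x, Y(0))`, i.e. `Y(0) = A* Y(T)`: the `∇*`-transport around `σ` is
`(A*)⁻¹`.
With `P` the Gram matrix of `g_p`, `A ↦ (A*)⁻¹ = P⁻¹ (Aᵀ)⁻¹ P` is an automorphism of `GL_n`,
an involution since `P` is symmetric. It maps the `∇`-loop transports into the `∇*`-loop
transports, and by the symmetry of duality also conversely, hence maps the holonomy group of
`∇`, the subgroup they generate, onto that of `∇*`.
-/

open Matrix

section InvAdjoint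

variable {H : Type*} [Group H] [StarMul H]

/-- `A ↦ (A*)⁻¹` for the adjoint `A* = P⁻¹ (star A) P` relative to `P`. -/
def invAdjointAut (P : H) : H ≃* H :=
  (starMulEquiv.trans (MulEquiv.inv' H).symm).trans (MulAut.conj P⁻¹)

theorem invAdjointAut_inv_apply (P A : H) : (invAdjointAut P A)⁻¹ = P⁻¹ * star A * P := by
  simp [invAdjointAut, mul_assoc]

theorem invAdjointAut_involutive {P : H} (hP : star P = P) :
    Function.Involutive (invAdjointAut P) := by
  intro A
  rw [← inv_inv (invAdjointAut P _), invAdjointAut_inv_apply, ← inv_inv (invAdjointAut P A),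
    invAdjointAut_inv_apply]
  simp only [star_mul, star_inv, star_star, hP]
  group

end InvAdjoint

theorem Matrix.GeneralLinearGroup.dotProduct_mulVec_invAdjointAut
    {ι R : Type*} [Fintype ι] [DecidableEq ι] [CommRing R] [StarRing R] [TrivialStar R]
    (P A : GL ι R) (x y : ι → R) :
    (A : Matrix ι ι R) *ᵥ x ⬝ᵥ (P : Matrix ι ι R) *ᵥ y
      = x ⬝ᵥ (P : Matrix ι ι R) *ᵥ ((invAdjointAut P A)⁻¹ : GL ι R) *ᵥ y := by
  rw [invAdjointAut_inv_apply, Units.val_mul, Units.val_mul, ← mulVec_mulVec, ← mulVec_mulVec,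
    mulVec_mulVec (M := (P : Matrix ι ι R)), Units.mul_inv, one_mulVec, Units.coe_star,
    star_eq_conjTranspose, conjTranspose_eq_transpose_of_trivial, mulVec_transpose,
    dotProduct_comm, dotProduct_mulVec, dotProduct_comm]

namespace RiemannModel

variable {n : ℕ} {M : Type*} (G : RiemannModel n M)

def bilin (x : M) : LinearMap.BilinForm ℝ (Fin n → ℝ) :=
  LinearMap.mk₂ ℝ (G.g x) (G.g_add_left x) (G.g_smul_left x)
    (fun v w w' => by rw [G.g_symm, G.g_add_left, G.g_symm x w, G.g_symm x w'])
    (fun c v w => by rw [G.g_symm, G.g_smul_left, G.g_symm x w, smul_eq_mul])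

@[simp]
theorem bilin_apply (x : M) (v w : Fin n → ℝ) : G.bilin x v w = G.g x v w := rfl

theorem g_zero_left (x : M) (w : Fin n → ℝ) : G.g x 0 w = 0 :=
  LinearMap.map_zero₂ (G.bilin x) w

theorem g_zero_right (x : M) (v : Fin n → ℝ) : G.g x v 0 = 0 :=
  map_zero (G.bilin x v)

theorem eq_of_forall_g_eq {x : M} {a b : Fin n → ℝ} (h : ∀ u, G.g x u a = G.g x u b) :
    a = b := by
  by_contra hab
  have hpos := G.g_posdef x (a - b) (sub_ne_zero.mpr hab)
  rw [← bilin_apply, map_sub, bilin_apply, bilin_apply, h, sub_self] at hpos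
  exact hpos.false

def gramMatrix (x : M) : Matrix (Fin n) (Fin n) ℝ := LinearMap.toMatrix₂' ℝ (G.bilin x)

theorem g_eq_dotProduct_gramMatrix (x : M) (v w : Fin n → ℝ) :
    G.g x v w = v ⬝ᵥ G.gramMatrix x *ᵥ w := by
  rw [gramMatrix, ← Matrix.toLinearMap₂'_apply', Matrix.toLinearMap₂'_toMatrix', bilin_apply]

theorem gramMatrix_posDef (x : M) : (G.gramMatrix x).PosDef := by
  refine posDef_iff_dotProduct_mulVec.mpr ⟨?_, fun v hv => ?_⟩
  · ext i j
    simp [gramMatrix, LinearMap.toMatrix₂'_apply, G.g_symm x (Pi.single i 1)]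
  · rw [star_trivial, ← g_eq_dotProduct_gramMatrix]
    exact G.g_posdef x v hv

noncomputable def gramUnit (x : M) : GL (Fin n) ℝ := (G.gramMatrix_posDef x).isUnit.unit

theorem star_gramUnit (x : M) : star (G.gramUnit x) = G.gramUnit x :=
  Units.ext <| by
    rw [Units.coe_star, gramUnit, IsUnit.unit_spec, star_eq_conjTranspose]
    exact (G.gramMatrix_posDef x).isHermitian

noncomputable abbrev invAdjointAt (x : M) : GL (Fin n) ℝ ≃* GL (Fin n) ℝ :=
  invAdjointAut (G.gramUnit x)

theorem g_mulVec_eq_g_mulVec_inv_invAdjointAt (x : M) (A : GL (Fin n) ℝ) (v w : Fin n → ℝ) :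
    G.g x ((A : Matrix (Fin n) (Fin n) ℝ) *ᵥ v) w
      = G.g x v (((G.invAdjointAt x A)⁻¹ : GL (Fin n) ℝ) *ᵥ w) := by
  have hP : ((G.gramUnit x : GL (Fin n) ℝ) : Matrix (Fin n) (Fin n) ℝ) = G.gramMatrix x :=
    IsUnit.unit_spec _
  rw [g_eq_dotProduct_gramMatrix, g_eq_dotProduct_gramMatrix, ← hP,
    GeneralLinearGroup.dotProduct_mulVec_invAdjointAut]

end RiemannModel

section Duality

variable {n : ℕ} {M : Type*} {G : RiemannModel n M}
  {D D' : (ℝ → M) → (ℝ → (Fin n → ℝ)) → ℝ → (Fin n → ℝ)}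

theorem AreDual.symm (hdual : AreDual G D D') : AreDual G D' D := by
  intro σ X Y hσ hX hY t
  simp only [G.g_symm _ (X _), G.g_symm _ (D' σ X t), add_comm (G.g _ (Y t) _)]
  exact hdual σ Y X hσ hY hX t

theorem AreDual.g_parallel_eq (hdual : AreDual G D D') {σ : ℝ → M} {X Y : ℝ → (Fin n → ℝ)}
    (hσ : G.Adm σ) (hX : G.AdmF σ X) (hY : G.AdmF σ Y)
    (hXpar : ∀ t, D σ X t = 0) (hYpar : ∀ t, D' σ Y t = 0) (s t : ℝ) :
    G.g (σ s) (X s) (Y s) = G.g (σ t) (X t) (Y t) := by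
  have hderiv : ∀ t, HasDerivAt (fun s => G.g (σ s) (X s) (Y s)) 0 t := fun t => by
    simpa [hXpar t, hYpar t, G.g_zero_left, G.g_zero_right] using hdual σ X Y hσ hX hY t
  exact is_const_of_deriv_eq_zero (fun t => (hderiv t).differentiableAt)
    (fun t => (hderiv t).deriv) s t

theorem IsTransportAlong.of_dual (hD' : IsConnection G D') (hdual : AreDual G D D')
    {σ : ℝ → M} {T : ℝ} {A B : GL (Fin n) ℝ} (hσ : G.Adm σ)
    (hA : IsTransportAlong G D σ T A)
    (hadj : ∀ x y, G.g (σ T) ((A : Matrix (Fin n) (Fin n) ℝ) *ᵥ x) y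
      = G.g (σ 0) x ((B : Matrix (Fin n) (Fin n) ℝ) *ᵥ y)) :
    IsTransportAlong G D' σ T B⁻¹ := by
  intro v
  obtain ⟨Y, hY, hYT, hYpar⟩ :=
    hD'.par_exists σ hσ T (((B⁻¹ : GL (Fin n) ℝ) : Matrix _ _ ℝ) *ᵥ v)
  refine ⟨Y, hY, G.eq_of_forall_g_eq (x := σ 0) fun u => ?_, hYpar, hYT⟩
  obtain ⟨X, hX, hX0, hXpar, hXT⟩ := hA u
  calc G.g (σ 0) u (Y 0) = G.g (σ T) (X T) (Y T) := by
        rw [← hX0, hdual.g_parallel_eq hσ hX hY hXpar hYpar]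
    _ = G.g (σ 0) u v := by
        rw [hXT, hYT, hadj, mulVec_mulVec, ← Units.val_mul, mul_inv_cancel, Units.val_one,
          one_mulVec]

theorem AreDual.image_loopTransports_subset (hD' : IsConnection G D') (hdual : AreDual G D D')
    (p : M) : G.invAdjointAt p '' loopTransports G D p ⊆ loopTransports G D' p := by
  rintro _ ⟨A, ⟨σ, T, hT, hσ, hσ0, hσT, hA⟩, rfl⟩
  refine ⟨σ, T, hT, hσ, hσ0, hσT, ?_⟩
  rw [← inv_inv (G.invAdjointAt p A)]
  exact hA.of_dual hD' hdual hσ fun x y => by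
    rw [hσ0, hσT, G.g_mulVec_eq_g_mulVec_inv_invAdjointAt]

theorem AreDual.image_loopTransports (hD : IsConnection G D) (hD' : IsConnection G D')
    (hdual : AreDual G D D') (p : M) :
    G.invAdjointAt p '' loopTransports G D p = loopTransports G D' p := by
  refine (hdual.image_loopTransports_subset hD' p).antisymm fun C hC => ?_
  exact ⟨G.invAdjointAt p C, hdual.symm.image_loopTransports_subset hD p ⟨C, hC, rfl⟩,
    invAdjointAut_involutive (G.star_gramUnit p) C⟩

theorem AreDual.map_holonomyGroup (hD : IsConnection G D) (hD' : IsConnection G D')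
    (hdual : AreDual G D D') (p : M) :
    (holonomyGroup G D p).map (G.invAdjointAt p).toMonoidHom = holonomyGroup G D' p := by
  rw [holonomyGroup, MonoidHom.map_closure, MulEquiv.coe_toMonoidHom,
    hdual.image_loopTransports hD hD' p, holonomyGroup]

end Duality

theorem dual_holonomy_groups_isomorphic
    {n : ℕ} {M : Type*} (G : RiemannModel n M)
    (D D' : (ℝ → M) → (ℝ → (Fin n → ℝ)) → ℝ → (Fin n → ℝ))
    (hD : IsConnection G D) (hD' : IsConnection G D')
    (hdual : AreDual G D D') (p : M) :
    -- concretely: the inverse `g_p`-adjoint of a loop transport of `∇` is a loop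
    -- transport of `∇*` along the same loop
    (∀ (σ : ℝ → M) (T : ℝ) (A B : Matrix.GeneralLinearGroup (Fin n) ℝ),
      0 < T → G.Adm σ → σ 0 = p → σ T = p →
      IsTransportAlong G D σ T A →
      (∀ x y : Fin n → ℝ,
        G.g p ((A : Matrix (Fin n) (Fin n) ℝ).mulVec x) y
          = G.g p x ((B : Matrix (Fin n) (Fin n) ℝ).mulVec y)) →
      IsTransportAlong G D' σ T B⁻¹) ∧
    -- and `A ↦ (A*)⁻¹` is an isomorphism of the holonomy groups
    ∃ ψ : holonomyGroup G D p ≃* holonomyGroup G D' p,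
      ∀ (A : holonomyGroup G D p) (x y : Fin n → ℝ),
        G.g p (((A : Matrix.GeneralLinearGroup (Fin n) ℝ) : Matrix (Fin n) (Fin n) ℝ).mulVec x) y
          = G.g p x
              ((((ψ A : Matrix.GeneralLinearGroup (Fin n) ℝ)⁻¹ : Matrix.GeneralLinearGroup (Fin n) ℝ)
                  : Matrix (Fin n) (Fin n) ℝ).mulVec y) := by
  refine ⟨fun σ T A B _ hσ hσ0 hσT hA hadj =>
    hA.of_dual hD' hdual hσ fun x y => by rw [hσ0, hσT, hadj], ?_⟩
  exact ⟨((G.invAdjointAt p).subgroupMap _).trans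
      (MulEquiv.subgroupCongr (hdual.map_holonomyGroup hD hD' p)),
    fun A => G.g_mulVec_eq_g_mulVec_inv_invAdjointAt p A⟩
end

section
/- Let U ⊆ ℝⁿ be open with coordinates (x₁,…,xₙ), and let φ_i(x_i) and A_i(x_i) be smooth functions of one variable with φ₁ < φ₂ < ⋯ < φₙ pointwise, each φ_i nowhere zero and each A_i nowhere zero. Set Π_i = (φ_i−φ₁)⋯(φ_i−φ_{i−1})(φ_{i+1}−φ_i)⋯(φₙ−φ_i), ρ_i = 1/(φ₁φ₂⋯φₙ · φ_i), g = Σ_i Π_i A_i dx_i², g̃ = ± Σ_i ρ_i Π_i A_i dx_i², and φ = ½ log|φ₁φ₂⋯φₙ|. Then the weighted connection ∇^φ of (U, g, φ) coincides with the Levi-Civita connection of (U, g̃); equivalently, the Christoffel symbols satisfy Γ̃ᵏ_{ij} = Γᵏ_{ij} − (∂_i φ)δ_jᵏ − (∂_j φ)δ_iᵏ for all i, j, k. In particular g and g̃ are projectively equivalent. -/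
/-- The partial derivative `∂f/∂x_i` of a function on `ℝⁿ`. -/
noncomputable def partialD {n : ℕ} (i : Fin n) (f : (Fin n → ℝ) → ℝ)
    (x : Fin n → ℝ) : ℝ :=
  deriv (fun s => f (Function.update x i s)) (x i)

/-- The Christoffel symbols `Γᵏᵢⱼ` of a diagonal (pseudo-Riemannian) metric
`g = Σ_i G_i dx_i²` on `ℝⁿ`, from the standard formula
`Γᵏᵢⱼ = ½ gᵏˡ (∂_i g_{jl} + ∂_j g_{il} − ∂_l g_{ij})`. -/
noncomputable def diagChristoffel {n : ℕ} (G : Fin n → (Fin n → ℝ) → ℝ)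
    (k i j : Fin n) (x : Fin n → ℝ) : ℝ :=
  if i = j then
    (if k = i then partialD i (G i) x / (2 * G i x)
     else -partialD k (G i) x / (2 * G k x))
  else if k = i then partialD j (G i) x / (2 * G i x)
  else if k = j then partialD i (G j) x / (2 * G j x)
  else 0

/-- The factor `Π_i = (φ_i−φ₁)⋯(φ_i−φ_{i−1})·(φ_{i+1}−φ_i)⋯(φ_n−φ_i)` of the
Levi-Civita construction, where `φ_l` is a function of the coordinate `x_l` alone. -/
noncomputable def lcProd {n : ℕ} (φf : Fin n → ℝ → ℝ) (i : Fin n)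
    (x : Fin n → ℝ) : ℝ :=
  (∏ l ∈ Finset.univ.filter (fun l => l < i), (φf i (x i) - φf l (x l))) *
  (∏ l ∈ Finset.univ.filter (fun l => i < l), (φf l (x l) - φf i (x i)))
/-!
The Christoffel symbols of a diagonal metric only involve the logarithmic partial derivatives
`∂_k log|G_l|` and the ratios `G_l / G_k`. Since `g̃_l = ε G_l / (φ₁⋯φₙ φ_l)`, passing from `g`
to `g̃` subtracts `φ_k'/φ_k` (and a second `φ_l'/φ_l` when `k = l`) from `∂_k log|G_l|` and
multiplies `G_l / G_k` by `φ_k / φ_l`. The subtracted terms are exactly the `∂φ` corrections of the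
weighted connection. For `Γᵏᵢᵢ` with `k ≠ i` there is no correction, and indeed `Π_i` depends on
`x_k` only through the factor `±(φ_k − φ_i)`, so `∂_k log|G_i| = φ_k'/(φ_k − φ_i)` and
`(φ_k'/(φ_k − φ_i) − φ_k'/φ_k) · φ_k/φ_i = φ_k'/(φ_k − φ_i)`.
-/

open Finset Function

section

variable {ι R : Type*} [DecidableEq ι]

theorem prod_mul_eq_prod_mul_of_forall_ne [CommMonoid R] {s : Finset ι} {f g : ι → R} {k : ι}
    (hk : k ∈ s) (h : ∀ l ∈ s, l ≠ k → f l = g l) :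
    (∏ l ∈ s, f l) * g k = (∏ l ∈ s, g l) * f k := by
  rw [← mul_prod_erase s f hk, ← mul_prod_erase s g hk,
    prod_congr rfl fun l hl => h l (mem_of_mem_erase hl) (ne_of_mem_erase hl)]
  ac_rfl

theorem differentiableAt_comp_update [Fintype ι] {f : (ι → ℝ) → ℝ} (hf : Differentiable ℝ f)
    (x : ι → ℝ) (k : ι) : DifferentiableAt ℝ (fun s => f (update x k s)) (x k) :=
  hf.differentiableAt.comp _ (hasDerivAt_update x k (x k)).differentiableAt

end

noncomputable def lcMetric {n : ℕ} (φf Af : Fin n → ℝ → ℝ) (l : Fin n) (y : Fin n → ℝ) : ℝ :=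
  lcProd φf l y * Af l (y l)

/-- The coefficients `ε ρ_l G_l` of `g̃`, where `ρ_l = 1/(φ₁⋯φₙ · φ_l)`. -/
noncomputable def rhoMetric {n : ℕ} (ε : ℝ) (φf : Fin n → ℝ → ℝ) (G : Fin n → (Fin n → ℝ) → ℝ)
    (l : Fin n) (y : Fin n → ℝ) : ℝ :=
  ε * (G l y / ((∏ m, φf m (y m)) * φf l (y l)))

section

variable {n : ℕ} {φf Af : Fin n → ℝ → ℝ} {ε : ℝ}

theorem partialD_div_self (f : (Fin n → ℝ) → ℝ) (k : Fin n) (x : Fin n → ℝ) :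
    partialD k f x / f x = logDeriv (fun s => f (update x k s)) (x k) := by
  rw [logDeriv_apply, update_eq_self, partialD]

theorem prod_apply_ne_zero (hφ0 : ∀ i s, φf i s ≠ 0) (x : Fin n → ℝ) :
    ∏ m, φf m (x m) ≠ 0 :=
  prod_ne_zero_iff.2 fun m _ => hφ0 m (x m)

theorem differentiable_prod_apply (hφdiff : ∀ i, Differentiable ℝ (φf i)) :
    Differentiable ℝ (fun y : Fin n → ℝ => ∏ m, φf m (y m)) := by
  fun_prop

variable (φf) in
theorem prod_comp_update (x : Fin n → ℝ) (k : Fin n) (s : ℝ) :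
    ∏ m, φf m (update x k s m) = φf k s * ∏ m ∈ univ.erase k, φf m (x m) := by
  simp_rw [apply_update (fun m => φf m), prod_update_of_mem (mem_univ k), sdiff_singleton_eq_erase]

theorem logDeriv_prod_comp_update (hφ0 : ∀ i s, φf i s ≠ 0) (x : Fin n → ℝ) (k : Fin n) :
    logDeriv (fun s => ∏ m, φf m (update x k s m)) (x k) = logDeriv (φf k) (x k) := by
  simp_rw [prod_comp_update]
  exact logDeriv_mul_const _ _ (prod_ne_zero_iff.2 fun m _ => hφ0 m (x m))

variable (φf) in
theorem logDeriv_apply_comp_update (x : Fin n → ℝ) (k l : Fin n) :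
    logDeriv (fun s => φf l (update x k s l)) (x k) =
      if k = l then logDeriv (φf l) (x l) else 0 := by
  split_ifs with h
  · subst h
    simp only [update_self]
  · simp only [update_of_ne (Ne.symm h), logDeriv_const, Pi.zero_apply]

theorem partialD_half_log_abs_prod (hφdiff : ∀ i, Differentiable ℝ (φf i))
    (hφ0 : ∀ i s, φf i s ≠ 0) (j : Fin n) (x : Fin n → ℝ) :
    partialD j (fun y => 1 / 2 * Real.log |∏ m, φf m (y m)|) x = logDeriv (φf j) (x j) / 2 := by
  have hd := differentiableAt_comp_update (differentiable_prod_apply hφdiff) x j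
  have h0 : ∏ m, φf m (update x j (x j) m) ≠ 0 := by
    simpa only [update_eq_self] using prod_apply_ne_zero hφ0 x
  simp only [partialD, Real.log_abs]
  rw [deriv_const_mul _ (hd.log h0), deriv.log hd h0, ← logDeriv_apply,
    logDeriv_prod_comp_update hφ0]
  ring

theorem sub_ne_zero_of_ordered (hord : ∀ i j : Fin n, i < j → ∀ s t : ℝ, φf i s < φf j t)
    {i j : Fin n} (hij : i ≠ j) (s t : ℝ) : φf i s - φf j t ≠ 0 := by
  rcases hij.lt_or_gt with h | h
  · exact (sub_neg.2 (hord i j h s t)).ne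
  · exact (sub_pos.2 (hord j i h t s)).ne'

theorem lcMetric_ne_zero (hord : ∀ i j : Fin n, i < j → ∀ s t : ℝ, φf i s < φf j t)
    (hA0 : ∀ i s, Af i s ≠ 0) (i : Fin n) (x : Fin n → ℝ) : lcMetric φf Af i x ≠ 0 := by
  refine mul_ne_zero (mul_ne_zero ?_ ?_) (hA0 i (x i)) <;>
    refine prod_ne_zero_iff.2 fun l hl => sub_ne_zero_of_ordered hord ?_ _ _
  exacts [(mem_filter.1 hl).2.ne', (mem_filter.1 hl).2.ne']

theorem differentiable_lcMetric (hφdiff : ∀ i, Differentiable ℝ (φf i))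
    (hAdiff : ∀ i, Differentiable ℝ (Af i)) (l : Fin n) :
    Differentiable ℝ (lcMetric φf Af l) := by
  unfold lcMetric lcProd
  fun_prop

variable (φf) in
theorem lcProd_comp_update_mul {i k : Fin n} (hki : k ≠ i) (x : Fin n → ℝ) (s : ℝ) :
    lcProd φf i (update x k s) * (φf k (x k) - φf i (x i)) =
      lcProd φf i x * (φf k s - φf i (x i)) := by
  have hfix : ∀ l ≠ k, update x k s l = x l := fun l hl => update_of_ne hl _ _
  unfold lcProd
  rw [hfix i hki.symm]
  rcases hki.lt_or_gt with hlt | hgt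
  · have hbelow := prod_mul_eq_prod_mul_of_forall_ne (s := univ.filter (· < i))
      (f := fun l => φf i (x i) - φf l (update x k s l)) (g := fun l => φf i (x i) - φf l (x l))
      (by simpa using hlt) fun l _ hl => by rw [hfix l hl]
    have habove : ∏ l ∈ univ.filter (i < ·), (φf l (update x k s l) - φf i (x i)) =
        ∏ l ∈ univ.filter (i < ·), (φf l (x l) - φf i (x i)) :=
      prod_congr rfl fun l hl => by rw [hfix l (hlt.trans (mem_filter.1 hl).2).ne']
    simp only [update_self] at hbelow
    rw [habove]
    linear_combination (-∏ l ∈ univ.filter (i < ·), (φf l (x l) - φf i (x i))) * hbelow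
  · have habove := prod_mul_eq_prod_mul_of_forall_ne (s := univ.filter (i < ·))
      (f := fun l => φf l (update x k s l) - φf i (x i)) (g := fun l => φf l (x l) - φf i (x i))
      (by simpa using hgt) fun l _ hl => by rw [hfix l hl]
    have hbelow : ∏ l ∈ univ.filter (· < i), (φf i (x i) - φf l (update x k s l)) =
        ∏ l ∈ univ.filter (· < i), (φf i (x i) - φf l (x l)) :=
      prod_congr rfl fun l hl => by rw [hfix l ((mem_filter.1 hl).2.trans hgt).ne]
    simp only [update_self] at habove
    rw [hbelow]
    linear_combination (∏ l ∈ univ.filter (· < i), (φf i (x i) - φf l (x l))) * habove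

theorem partialD_lcMetric_of_ne (hφdiff : ∀ i, Differentiable ℝ (φf i))
    (hord : ∀ i j : Fin n, i < j → ∀ s t : ℝ, φf i s < φf j t) {i k : Fin n} (hki : k ≠ i)
    (x : Fin n → ℝ) :
    partialD k (lcMetric φf Af i) x =
      lcMetric φf Af i x * deriv (φf k) (x k) / (φf k (x k) - φf i (x i)) := by
  have hki' := sub_ne_zero_of_ordered hord hki (x k) (x i)
  have hline : (fun s => lcMetric φf Af i (update x k s)) = fun s =>
      lcMetric φf Af i x / (φf k (x k) - φf i (x i)) * (φf k s - φf i (x i)) := by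
    funext s
    unfold lcMetric
    rw [update_of_ne hki.symm]
    field_simp
    linear_combination Af i (x i) * lcProd_comp_update_mul φf hki x s
  rw [partialD, hline, deriv_const_mul _ ((hφdiff k _).sub_const _), deriv_sub_const]
  ring

theorem rhoMetric_ne_zero (hε : ε ≠ 0) (hφ0 : ∀ i s, φf i s ≠ 0)
    {G : Fin n → (Fin n → ℝ) → ℝ} {l : Fin n} {x : Fin n → ℝ} (hG0 : G l x ≠ 0) :
    rhoMetric ε φf G l x ≠ 0 :=
  mul_ne_zero hε <| div_ne_zero hG0 <| mul_ne_zero (prod_apply_ne_zero hφ0 x) (hφ0 l (x l))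

theorem rhoMetric_div_rhoMetric (hε : ε ≠ 0) (hφ0 : ∀ i s, φf i s ≠ 0)
    (G : Fin n → (Fin n → ℝ) → ℝ) (a b : Fin n) (x : Fin n → ℝ) :
    rhoMetric ε φf G b x / rhoMetric ε φf G a x = G b x / G a x * (φf a (x a) / φf b (x b)) := by
  have hP0 := prod_apply_ne_zero hφ0 x
  have ha := hφ0 a (x a)
  have hb := hφ0 b (x b)
  unfold rhoMetric
  field_simp

theorem partialD_rhoMetric_div_self (hε : ε ≠ 0) (hφdiff : ∀ i, Differentiable ℝ (φf i))
    (hφ0 : ∀ i s, φf i s ≠ 0) {G : Fin n → (Fin n → ℝ) → ℝ} {l : Fin n}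
    (hGdiff : Differentiable ℝ (G l)) {x : Fin n → ℝ} (hG0 : G l x ≠ 0) (k : Fin n) :
    partialD k (rhoMetric ε φf G l) x / rhoMetric ε φf G l x =
      partialD k (G l) x / G l x - logDeriv (φf k) (x k) -
        if k = l then logDeriv (φf l) (x l) else 0 := by
  have hP0 := prod_apply_ne_zero hφ0 x
  have hφl : Differentiable ℝ (fun y : Fin n → ℝ => φf l (y l)) := by fun_prop
  rw [partialD_div_self, partialD_div_self]
  unfold rhoMetric
  rw [logDeriv_const_mul _ _ hε, logDeriv_div, logDeriv_mul, logDeriv_prod_comp_update hφ0,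
    logDeriv_apply_comp_update, sub_sub]
  · simpa only [update_eq_self] using hP0
  · simpa only [update_eq_self] using hφ0 l (x l)
  · exact differentiableAt_comp_update (differentiable_prod_apply hφdiff) x k
  · exact differentiableAt_comp_update hφl x k
  · simpa only [update_eq_self] using hG0
  · simpa only [update_eq_self] using mul_ne_zero hP0 (hφ0 l (x l))
  · exact differentiableAt_comp_update hGdiff x k
  · exact differentiableAt_comp_update ((differentiable_prod_apply hφdiff).mul hφl) x k

theorem partialD_rhoMetric_lcMetric_div_of_ne (hε : ε ≠ 0)
    (hφdiff : ∀ i, Differentiable ℝ (φf i)) (hAdiff : ∀ i, Differentiable ℝ (Af i))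
    (hord : ∀ i j : Fin n, i < j → ∀ s t : ℝ, φf i s < φf j t)
    (hφ0 : ∀ i s, φf i s ≠ 0) (hA0 : ∀ i s, Af i s ≠ 0) {a b : Fin n} (hab : a ≠ b)
    (x : Fin n → ℝ) :
    partialD a (rhoMetric ε φf (lcMetric φf Af) b) x / rhoMetric ε φf (lcMetric φf Af) a x =
      partialD a (lcMetric φf Af b) x / lcMetric φf Af a x := by
  have hGb := lcMetric_ne_zero hord hA0 b x
  have hGa := lcMetric_ne_zero hord hA0 a x
  have hlog := partialD_rhoMetric_div_self hε hφdiff hφ0 (differentiable_lcMetric hφdiff hAdiff b)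
    hGb a
  rw [if_neg hab] at hlog
  have hab' := sub_ne_zero_of_ordered hord hab (x a) (x b)
  have ha := hφ0 a (x a)
  have hb := hφ0 b (x b)
  rw [← div_mul_div_cancel₀ (rhoMetric_ne_zero hε hφ0 hGb), hlog, rhoMetric_div_rhoMetric hε hφ0,
    partialD_lcMetric_of_ne hφdiff hord hab, logDeriv_apply]
  field_simp
  ring

end

theorem weighted_connection_eq_levi_civita_of_projective_metric
    {n : ℕ} (φf Af : Fin n → ℝ → ℝ) (ε : ℝ) (hε : ε = 1 ∨ ε = -1)
    (hφdiff : ∀ i, Differentiable ℝ (φf i)) (hAdiff : ∀ i, Differentiable ℝ (Af i))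
    (hord : ∀ i j : Fin n, i < j → ∀ s t : ℝ, φf i s < φf j t)
    (hφ0 : ∀ (i : Fin n) (s : ℝ), φf i s ≠ 0) (hA0 : ∀ (i : Fin n) (s : ℝ), Af i s ≠ 0)
    -- the metric `g = Σ Π_i A_i dx_i²`
    (G : Fin n → (Fin n → ℝ) → ℝ) (hG : G = fun l y => lcProd φf l y * Af l (y l))
    -- the metric `g̃ = ± Σ ρ_i Π_i A_i dx_i²`
    (Gt : Fin n → (Fin n → ℝ) → ℝ)
    (hGt : Gt = fun l y => ε * (lcProd φf l y * Af l (y l) / ((∏ m, φf m (y m)) * φf l (y l))))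
    -- the density `φ = ½ log|φ₁⋯φₙ|`
    (φw : (Fin n → ℝ) → ℝ) (hφw : φw = fun y => (1 / 2) * Real.log |∏ m, φf m (y m)|) :
    ∀ (x : Fin n → ℝ) (k i j : Fin n),
      diagChristoffel Gt k i j x
        = diagChristoffel G k i j x
          - partialD i φw x * (if j = k then 1 else 0)
          - partialD j φw x * (if i = k then 1 else 0) := by
  intro x k i j
  have hε0 : ε ≠ 0 := by rcases hε with rfl | rfl <;> norm_num
  obtain rfl : G = lcMetric φf Af := hG
  obtain rfl : Gt = rhoMetric ε φf (lcMetric φf Af) := hGt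
  subst hφw
  have hself a b := partialD_rhoMetric_div_self hε0 hφdiff hφ0
    (differentiable_lcMetric hφdiff hAdiff b) (lcMetric_ne_zero hord hA0 b x) a
  have hcross a b (hab : a ≠ b) :=
    partialD_rhoMetric_lcMetric_div_of_ne hε0 hφdiff hAdiff hord hφ0 hA0 hab x
  simp only [diagChristoffel, partialD_half_log_abs_prod hφdiff hφ0, div_mul_eq_div_div_swap]
  split_ifs <;> subst_vars <;> simp_all [neg_div] <;> ring
end

section
/- Let (N,g,φ) be ℝⁿ with the metric g = Σ_j Π_j dx_j² of the Levi-Civita construction with φₙ(xₙ) = n + cos xₙ, the other φ_j pairwise distinct nonzero constants less than n−1, and A_j = 1. For i < n let M_i ⊂ N be the 2-dimensional submanifold defined by x_j = 0 for all j ∉ {i,n}. Then M_i is a totally geodesic submanifold of (N,g), and for any piecewise C¹ loop σ in M_i based at p ∈ M_i, the Riemannian (g-)parallel translation P_σ acts as the identity on the normal space T_p^⊥M_i. -/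
/-!
Every factor `Π_k` of the metric depends on the last coordinate `x_m` alone, `Π_k = F_k(x_m)`,
which gives the closed form
`Γᵏᵢⱼ = (δ_{jm} δ_{ki} + δ_{im} δ_{kj}) F_k' / 2F_k − δ_{ij} δ_{km} F_i' / 2F_m`;
part (a) is read off from it.  Along a curve in `M_{i₀}` the normal velocity components vanish,
so a normal component of a parallel field obeys `X_k' = −(F_k' σ_m' / 2F_k) X_k`: the product
`X_k √(F_k ∘ σ_m)` is constant and `X_k` returns to its initial value once `σ_m` does.  Parallel
transport also preserves the `g`-length `Σ_k F_k X_k²`, so the tangential part of `X`, which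
starts at `0`, ends with `g`-length `0`.
-/

open Finset

theorem eq_of_hasDerivAt_zero_off_countable {E : Type*} [NormedAddCommGroup E] [NormedSpace ℝ E]
    [CompleteSpace E] {f : ℝ → E} {s : Set ℝ} (hs : s.Countable) (hf : Continuous f)
    (hd : ∀ t ∉ s, HasDerivAt f 0 t) (a b : ℝ) : f a = f b := by
  have h := MeasureTheory.integral_eq_of_hasDerivAt_off_countable (a := a) (b := b) f 0 hs
    hf.continuousOn (fun t ht => hd t ht.2) intervalIntegrable_const
  simp only [Pi.zero_apply, intervalIntegral.integral_zero] at h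
  exact (sub_eq_zero.1 h.symm).symm

theorem lcProd_congr {n : ℕ} {φf : Fin n → ℝ → ℝ} {x y : Fin n → ℝ}
    (h : ∀ l, φf l (x l) = φf l (y l)) (i : Fin n) : lcProd φf i x = lcProd φf i y := by
  simp only [lcProd, h]

theorem lcProd_pos {n : ℕ} {φf : Fin n → ℝ → ℝ} (hφ : ∀ i j, i < j → ∀ s t, φf i s < φf j t)
    (i : Fin n) (x : Fin n → ℝ) : 0 < lcProd φf i x :=
  mul_pos (prod_pos fun l hl => sub_pos.2 (hφ l i (mem_filter.1 hl).2 _ _))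
    (prod_pos fun l hl => sub_pos.2 (hφ i l (mem_filter.1 hl).2 _ _))

theorem lcProd_eq_single {n : ℕ} {φf : Fin n → ℝ → ℝ} {m : Fin n}
    (hconst : ∀ l ≠ m, ∀ s t, φf l s = φf l t) (i : Fin n) (x : Fin n → ℝ) :
    lcProd φf i x = lcProd φf i (Pi.single m (x m)) := by
  refine lcProd_congr (fun l => ?_) i
  by_cases hl : l = m
  · subst hl
    simp
  · exact hconst l hl _ _

theorem differentiable_lcProd {n : ℕ} {φf : Fin n → ℝ → ℝ} (hφ : ∀ l, Differentiable ℝ (φf l))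
    (i : Fin n) : Differentiable ℝ (lcProd φf i) := by
  unfold lcProd
  fun_prop

theorem differentiable_lcProd_single {n : ℕ} {φf : Fin n → ℝ → ℝ}
    (hφ : ∀ l, Differentiable ℝ (φf l)) (i m : Fin n) :
    Differentiable ℝ fun s => lcProd φf i (Pi.single m s) :=
  (differentiable_lcProd hφ i).comp
    fun s => (hasFDerivAt_single (𝕜 := ℝ) (E := fun _ : Fin n => ℝ) (i := m) s).differentiableAt

theorem eq_of_sum_sq_mul_eq {ι : Type*} [Fintype ι] {w x y : ι → ℝ} (hw : ∀ k, 0 < w k)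
    (hxy : ∀ k, y k = 0 ∨ x k = y k) (h : ∑ k, x k ^ 2 * w k = ∑ k, y k ^ 2 * w k) : x = y := by
  have hnonneg : ∀ k ∈ univ, 0 ≤ (x k ^ 2 - y k ^ 2) * w k := fun k _ => by
    rcases hxy k with hy | hxy
    · simpa [hy] using mul_nonneg (sq_nonneg (x k)) (hw k).le
    · simp [hxy]
  have hzero := (sum_eq_zero_iff_of_nonneg hnonneg).1
    (by simp only [sub_mul, sum_sub_distrib, h, sub_self])
  funext k
  rcases hxy k with hy | hxy
  · simpa [hy, (hw k).ne'] using hzero k (mem_univ k)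
  · exact hxy

def IsParallelAlong {n : ℕ} (G : Fin n → (Fin n → ℝ) → ℝ) (σ σd X : ℝ → Fin n → ℝ)
    (s : Set ℝ) : Prop :=
  ∀ t ∉ s, HasDerivAt X (fun k => -∑ i, ∑ j, diagChristoffel G k i j (σ t) * σd t i * X t j) t

section DependingOnOneCoordinate

variable {n : ℕ} {G : Fin n → (Fin n → ℝ) → ℝ} {F : Fin n → ℝ → ℝ} {m : Fin n}

theorem partialD_eq_ite (hG : ∀ k y, G k y = F k (y m)) (i k : Fin n) (x : Fin n → ℝ) :
    partialD i (G k) x = if i = m then deriv (F k) (x m) else 0 := by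
  simp only [partialD, hG]
  split_ifs with him
  · subst him
    simp
  · simp [Function.update_of_ne (Ne.symm him)]

theorem diagChristoffel_eq (hG : ∀ k y, G k y = F k (y m)) (k i j : Fin n) (x : Fin n → ℝ) :
    diagChristoffel G k i j x =
      (if j = m ∧ k = i then deriv (F k) (x m) / (2 * F k (x m)) else 0) +
      (if k = j ∧ i = m then deriv (F k) (x m) / (2 * F k (x m)) else 0) -
      (if i = j ∧ k = m then deriv (F i) (x m) / (2 * F m (x m)) else 0) := by
  simp only [diagChristoffel, partialD_eq_ite hG, hG]
  split_ifs <;> grind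

theorem sum_diagChristoffel_mul_mul (hG : ∀ k y, G k y = F k (y m)) (k : Fin n)
    (x a b : Fin n → ℝ) :
    ∑ i, ∑ j, diagChristoffel G k i j x * a i * b j =
      deriv (F k) (x m) / (2 * F k (x m)) * (a k * b m + a m * b k) -
      if k = m then (∑ i, deriv (F i) (x m) * a i * b i) / (2 * F m (x m)) else 0 := by
  simp only [diagChristoffel_eq hG, add_mul, sub_mul, sum_add_distrib,
    sum_sub_distrib, ite_and, ite_mul, zero_mul, sum_ite_eq, sum_ite_eq', mem_univ, if_true]
  split_ifs
  · simp only [sum_div, div_mul_eq_mul_div]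
    ring
  · simp only [sum_const_zero]
    ring

theorem diagChristoffel_eq_zero_of_ne (hG : ∀ k y, G k y = F k (y m)) {k i j : Fin n}
    (hki : k ≠ i) (hkj : k ≠ j) (hkm : k ≠ m) (x : Fin n → ℝ) : diagChristoffel G k i j x = 0 := by
  simp [diagChristoffel_eq hG, hki, hkj, hkm]

variable {σ σd X : ℝ → Fin n → ℝ} {s : Set ℝ}

theorem IsParallelAlong.hasDerivAt_apply (hG : ∀ k y, G k y = F k (y m))
    (hX : IsParallelAlong G σ σd X s) {t : ℝ} (ht : t ∉ s) (k : Fin n) :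
    HasDerivAt (fun t => X t k)
      (-(deriv (F k) (σ t m) / (2 * F k (σ t m)) * (σd t k * X t m + σd t m * X t k) -
        if k = m then (∑ i, deriv (F i) (σ t m) * σd t i * X t i) / (2 * F m (σ t m))
        else 0)) t := by
  simpa only [sum_diagChristoffel_mul_mul hG] using hasDerivAt_pi.1 (hX t ht) k

theorem IsParallelAlong.hasDerivAt_sum_sq_mul (hG : ∀ k y, G k y = F k (y m))
    (hF : ∀ k, Differentiable ℝ (F k)) (hF0 : ∀ k s, F k s ≠ 0)
    (hσ : ∀ t ∉ s, HasDerivAt σ (σd t) t) (hX : IsParallelAlong G σ σd X s) {t : ℝ}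
    (ht : t ∉ s) : HasDerivAt (fun t => ∑ k, X t k ^ 2 * F k (σ t m)) 0 t := by
  have hterm : ∀ k, HasDerivAt (fun t => X t k ^ 2 * F k (σ t m))
      ((if k = m then X t m * ∑ i, deriv (F i) (σ t m) * σd t i * X t i else 0) -
        X t m * (deriv (F k) (σ t m) * σd t k * X t k)) t := by
    intro k
    refine (((hX.hasDerivAt_apply hG ht k).fun_pow 2).fun_mul
      ((hF k _).hasDerivAt.comp t (hasDerivAt_pi.1 (hσ t ht) m))).congr_deriv ?_
    have hFk := hF0 k (σ t m)
    simp only [Function.comp_apply]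
    split_ifs with hkm
    · subst hkm
      field_simp
      ring
    · field_simp
      ring
  refine (HasDerivAt.fun_sum (u := univ) fun k _ => hterm k).congr_deriv ?_
  rw [sum_sub_distrib, sum_ite_eq', ← mul_sum, if_pos (mem_univ m), sub_self]

theorem IsParallelAlong.sum_sq_mul_eq (hG : ∀ k y, G k y = F k (y m))
    (hF : ∀ k, Differentiable ℝ (F k)) (hF0 : ∀ k s, F k s ≠ 0) (hs : s.Countable)
    (hσc : Continuous σ) (hσ : ∀ t ∉ s, HasDerivAt σ (σd t) t) (hXc : Continuous X)
    (hX : IsParallelAlong G σ σd X s) (a b : ℝ) :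
    ∑ k, X a k ^ 2 * F k (σ a m) = ∑ k, X b k ^ 2 * F k (σ b m) := by
  have hFc : ∀ k, Continuous (F k) := fun k => (hF k).continuous
  exact eq_of_hasDerivAt_zero_off_countable hs (by fun_prop)
    (fun t ht => hX.hasDerivAt_sum_sq_mul hG hF hF0 hσ ht) a b

theorem IsParallelAlong.apply_eq_of_forall_apply_eq_zero (hG : ∀ k y, G k y = F k (y m))
    {k : Fin n} (hF : Differentiable ℝ (F k)) (hFpos : ∀ s, 0 < F k s) (hkm : k ≠ m)
    (hs : s.Countable) (hσc : Continuous σ) (hσk : ∀ t, σ t k = 0)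
    (hσ : ∀ t ∉ s, HasDerivAt σ (σd t) t) (hXc : Continuous X)
    (hX : IsParallelAlong G σ σd X s) {a b : ℝ} (hab : σ a m = σ b m) : X a k = X b k := by
  have hσdk : ∀ t ∉ s, σd t k = 0 := fun t ht =>
    (hasDerivAt_pi.1 (hσ t ht) k).unique (by simpa only [hσk] using hasDerivAt_const t (0 : ℝ))
  have hFc := hF.continuous
  have hconst := eq_of_hasDerivAt_zero_off_countable (f := fun t => X t k * √(F k (σ t m))) hs
    (by fun_prop) (fun t ht => ?_) a b
  · rw [hab] at hconst
    exact mul_right_cancel₀ (Real.sqrt_pos.2 (hFpos _)).ne' hconst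
  have hFσ : HasDerivAt (fun t => F k (σ t m)) (deriv (F k) (σ t m) * σd t m) t :=
    (hF (σ t m)).hasDerivAt.comp t (hasDerivAt_pi.1 (hσ t ht) m)
  refine ((hX.hasDerivAt_apply hG ht k).fun_mul
    ((Real.hasDerivAt_sqrt (hFpos (σ t m)).ne').comp t hFσ)).congr_deriv ?_
  have hF0 := (hFpos (σ t m)).ne'
  simp only [hσdk t ht, if_neg hkm, Function.comp_apply]
  field_simp
  rw [Real.sq_sqrt (hFpos _).le]
  ring

end DependingOnOneCoordinate

theorem levi_civita_coordinate_plane_totally_geodesic_and_normal_holonomy_trivial_general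
    (n : ℕ) (c : Fin n → ℝ) (φf : Fin n → ℝ → ℝ)
    (hconst : ∀ i : Fin n, (i : ℕ) + 1 ≠ n → φf i = fun _ => c i)
    (hlast : ∀ i : Fin n, (i : ℕ) + 1 = n → φf i = fun s => (n : ℝ) + Real.cos s)
    (hord : ∀ i j : Fin n, i < j → ∀ s t : ℝ, φf i s < φf j t)
    -- the metric `g = Σ_j Π_j dx_j²`
    (G : Fin n → (Fin n → ℝ) → ℝ) (hG : G = fun l y => lcProd φf l y)
    -- the 2-dimensional coordinate submanifold `M_{i₀}`
    (i₀ : Fin n) :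
    -- (a) `M_{i₀}` is totally geodesic: the second fundamental form vanishes
    (∀ x : Fin n → ℝ, (∀ j : Fin n, j ≠ i₀ → (j : ℕ) + 1 ≠ n → x j = 0) →
      ∀ j l k : Fin n,
        (j = i₀ ∨ (j : ℕ) + 1 = n) → (l = i₀ ∨ (l : ℕ) + 1 = n) →
        ¬(k = i₀ ∨ (k : ℕ) + 1 = n) →
        diagChristoffel G k j l x = 0) ∧
    -- (b) parallel translation around loops in `M_{i₀}` fixes the normal space
    (∀ (T : ℝ) (σ σd : ℝ → Fin n → ℝ) (exc : Finset ℝ),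
      0 < T → Continuous σ →
      (∀ t, ∀ j : Fin n, j ≠ i₀ → (j : ℕ) + 1 ≠ n → σ t j = 0) →
      σ T = σ 0 →
      (∀ t ∉ exc, HasDerivAt σ (σd t) t) →
      (∃ C, ∀ t ∈ Set.Icc (0 : ℝ) T, ‖σd t‖ ≤ C) →
      ∀ (v : Fin n → ℝ) (X : ℝ → Fin n → ℝ),
        (∀ j : Fin n, (j = i₀ ∨ (j : ℕ) + 1 = n) → v j = 0) →
        Continuous X → X 0 = v →
        (∀ t ∉ exc, HasDerivAt X (fun k =>
          -(∑ i, ∑ j, diagChristoffel G k i j (σ t) * σd t i * X t j)) t) →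
        X T = v) := by
  have hn := i₀.pos
  obtain ⟨m, hm⟩ : ∃ m : Fin n, (m : ℕ) + 1 = n :=
    ⟨⟨n - 1, Nat.sub_lt hn one_pos⟩, Nat.sub_add_cancel hn⟩
  have hlast_iff : ∀ j : Fin n, (j : ℕ) + 1 = n ↔ j = m := fun j => by rw [Fin.ext_iff]; omega
  have hφ : ∀ l, Differentiable ℝ (φf l) := fun l => by
    by_cases hl : (l : ℕ) + 1 = n
    · rw [hlast l hl]
      fun_prop
    · rw [hconst l hl]
      fun_prop
  set F : Fin n → ℝ → ℝ := fun k s => lcProd φf k (Pi.single m s)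
  have hGF : ∀ k y, G k y = F k (y m) := hG ▸ lcProd_eq_single fun l hl s t => by
    rw [hconst l (mt (hlast_iff l).1 hl)]
  have hF : ∀ k, Differentiable ℝ (F k) := fun k => differentiable_lcProd_single hφ k m
  have hFpos : ∀ k s, 0 < F k s := fun k s => lcProd_pos hord k _
  simp only [hlast_iff, ne_eq]
  refine ⟨fun x _ j l k hj hl hk => ?_,
    fun T σ σd exc _ hσc hσM hloop hσd _ v X hv hXc hX0 hXd => ?_⟩
  · obtain ⟨hki₀, hkm⟩ := not_or.1 hk
    refine diagChristoffel_eq_zero_of_ne hGF ?_ ?_ hkm x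
    · rcases hj with rfl | rfl <;> assumption
    · rcases hl with rfl | rfl <;> assumption
  · have hX : IsParallelAlong G σ σd X exc := hXd
    subst hX0
    refine eq_of_sum_sq_mul_eq (w := fun k => F k (σ 0 m)) (fun k => hFpos k _) (fun k => ?_) ?_
    · by_cases hk : k = i₀ ∨ k = m
      · exact Or.inl (hv k hk)
      · obtain ⟨hki₀, hkm⟩ := not_or.1 hk
        exact Or.inr (hX.apply_eq_of_forall_apply_eq_zero hGF (hF k) (hFpos k) hkm
          exc.countable_toSet hσc (fun t => hσM t k hki₀ hkm) hσd hXc (congrFun hloop m))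
    · simpa only [hloop] using hX.sum_sq_mul_eq hGF hF (fun k s => (hFpos k s).ne')
        exc.countable_toSet hσc hσd hXc T 0

theorem levi_civita_coordinate_plane_totally_geodesic_and_normal_holonomy_trivial
    (n : ℕ) (c : Fin n → ℝ) (φf : Fin n → ℝ → ℝ)
    (hconst : ∀ i : Fin n, (i : ℕ) + 1 ≠ n → φf i = fun _ => c i)
    (hlast : ∀ i : Fin n, (i : ℕ) + 1 = n → φf i = fun s => (n : ℝ) + Real.cos s)
    (hord : ∀ i j : Fin n, i < j → ∀ s t : ℝ, φf i s < φf j t)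
    (hzero : ∀ (i : Fin n) (s : ℝ), φf i s ≠ 0)
    (hbound : ∀ i : Fin n, (i : ℕ) + 1 ≠ n → c i < (n : ℝ) - 1)
    -- the metric `g = Σ_j Π_j dx_j²`
    (G : Fin n → (Fin n → ℝ) → ℝ) (hG : G = fun l y => lcProd φf l y)
    -- the 2-dimensional coordinate submanifold `M_{i₀}`
    (i₀ : Fin n) (hi₀ : (i₀ : ℕ) + 1 ≠ n) :
    -- (a) `M_{i₀}` is totally geodesic: the second fundamental form vanishes
    (∀ x : Fin n → ℝ, (∀ j : Fin n, j ≠ i₀ → (j : ℕ) + 1 ≠ n → x j = 0) →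
      ∀ j l k : Fin n,
        (j = i₀ ∨ (j : ℕ) + 1 = n) → (l = i₀ ∨ (l : ℕ) + 1 = n) →
        ¬(k = i₀ ∨ (k : ℕ) + 1 = n) →
        diagChristoffel G k j l x = 0) ∧
    -- (b) parallel translation around loops in `M_{i₀}` fixes the normal space
    (∀ (T : ℝ) (σ σd : ℝ → Fin n → ℝ) (exc : Finset ℝ),
      0 < T → Continuous σ →
      (∀ t, ∀ j : Fin n, j ≠ i₀ → (j : ℕ) + 1 ≠ n → σ t j = 0) →
      σ T = σ 0 →
      (∀ t ∉ exc, HasDerivAt σ (σd t) t) →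
      (∃ C, ∀ t ∈ Set.Icc (0 : ℝ) T, ‖σd t‖ ≤ C) →
      ∀ (v : Fin n → ℝ) (X : ℝ → Fin n → ℝ),
        (∀ j : Fin n, (j = i₀ ∨ (j : ℕ) + 1 = n) → v j = 0) →
        Continuous X → X 0 = v →
        (∀ t ∉ exc, HasDerivAt X (fun k =>
          -(∑ i, ∑ j, diagChristoffel G k i j (σ t) * σd t i * X t j)) t) →
        X T = v) :=
  levi_civita_coordinate_plane_totally_geodesic_and_normal_holonomy_trivial_general n c φf hconst
    hlast hord G hG i₀
end
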